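/- arXiv:1602.08365 — 2 statements merged into one kernel-verified Lean document; each statement's English description precedes it below -/
import Mathlib

section
/- The iterated Boolean sum 𝐁_{𝐦,𝐧} := ( ⋯ ((𝐏_{m_0}𝐐_{n_r}) ⊕ (𝐏_{m_1}𝐐_{n_{r−1}})) ⊕ ⋯ ) ⊕ (𝐏_{m_r}𝐐_{n_0}), where A ⊕ B := A + B − AB, is a linear projector of C([a,b]×[c,d]) onto the space of restrictions to [a,b]×[c,d] of polynomials in S_{𝐦,𝐧} = Σ_{k=0}^r Π_{m_k}⊗Π_{n_{r−k}}: it is linear, idempotent, and its range is exactly S_{𝐦,𝐧}. -/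
open scoped BigOperators

noncomputable section

/-- Sup norm `‖f‖_{∞,S}` of a function over a set `S`. -/
def supN {α : Type*} (S : Set α) (f : α → ℝ) : ℝ := ⨆ z : S, |f z.1|

/-- Operator norm of `L` over continuous functions on `R` with sup norm `≤ 1`. -/
def opN {α : Type*} [TopologicalSpace α] (R : Set α) (L : (α → ℝ) → α → ℝ) : ℝ :=
  ⨆ G : {G : α → ℝ // ContinuousOn G R ∧ supN R G ≤ 1}, supN R (L G.1)

/-- Bernstein basis function `B_i^m` scaled to `[a,b]`. -/
def bern (m : ℕ) (a b : ℝ) (i : ℕ) : ℝ → ℝ := fun x =>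
  (m.choose i : ℝ) * ((b - x) / (b - a)) ^ (m - i) * ((x - a) / (b - a)) ^ i

/-- Uniform node `x_i^m = a + (i/m)(b-a)`. -/
def node (m : ℕ) (a b : ℝ) (i : ℕ) : ℝ := a + (i : ℝ) / (m : ℝ) * (b - a)

/-- Bernstein collocation matrix `T_m = (B_j^m(x_i^m))_{ij}`. -/
def Tmat (m : ℕ) (a b : ℝ) : Matrix (Fin (m + 1)) (Fin (m + 1)) ℝ := fun i j =>
  bern m a b j (node m a b i)

/-- Dual functionals `λ_j^m f = (T_m⁻¹ · (f(x_i^m))_i)_j`. -/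
def lam (m : ℕ) (a b : ℝ) (j : Fin (m + 1)) (f : ℝ → ℝ) : ℝ :=
  (Tmat m a b)⁻¹.mulVec (fun i => f (node m a b i)) j

/-- `λ_j^m` with a natural-number index (zero out of range). -/
def lamN (m : ℕ) (a b : ℝ) (j : ℕ) (f : ℝ → ℝ) : ℝ :=
  if h : j < m + 1 then lam m a b ⟨j, h⟩ f else 0

/-- The index map `α^k : i ↦ i·(m_r/m_k)` (when `m_k ∣ m_r` and `i ≤ m_k` the `min` is inert). -/
def alphaF (mk mr : ℕ) (i : Fin (mk + 1)) : Fin (mr + 1) :=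
  ⟨min (i.1 * (mr / mk)) mr, Nat.lt_succ_of_le (min_le_right _ _)⟩

/-- Degree elevation matrix `E_{m_k}^{m_r} = (λ_i^{m_r}(B_j^{m_k}))_{ij}`. -/
def Emat (mk mr : ℕ) (a b : ℝ) : Matrix (Fin (mr + 1)) (Fin (mk + 1)) ℝ := fun i j =>
  lam mr a b i (bern mk a b j)

/-- Row submatrix `E_{m_k}^{m_r}(α^k,:)`. -/
def Esub (mk mr : ℕ) (a b : ℝ) : Matrix (Fin (mk + 1)) (Fin (mk + 1)) ℝ := fun i j =>
  Emat mk mr a b (alphaF mk mr i) j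

/-- Dual basis polynomials `D_j^{m_k} = Σ_ℓ (E(α^k,:)⁻¹)_{ℓ j} B_ℓ^{m_k}`. -/
def Dq (mk mr : ℕ) (a b : ℝ) (j : Fin (mk + 1)) : ℝ → ℝ := fun x =>
  ∑ l : Fin (mk + 1), (Esub mk mr a b)⁻¹ l j * bern mk a b l x

/-- `D_j^{m_k}` with a natural-number index (zero out of range). -/
def DqN (mk mr : ℕ) (a b : ℝ) (j : ℕ) : ℝ → ℝ :=
  if h : j < mk + 1 then Dq mk mr a b ⟨j, h⟩ else 0

/-- Functionals `μ_i^{m_k} = λ_{α^k_i}^{m_r}`. -/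
def mu (mk mr : ℕ) (a b : ℝ) (i : Fin (mk + 1)) (f : ℝ → ℝ) : ℝ :=
  lam mr a b (alphaF mk mr i) f

/-- Univariate quasi-interpolant `P_{m_k} f = Σ_i (μ_i^{m_k} f)·D_i^{m_k}`. -/
def Pop (mk mr : ℕ) (a b : ℝ) (f : ℝ → ℝ) : ℝ → ℝ := fun x =>
  ∑ i : Fin (mk + 1), mu mk mr a b i f * Dq mk mr a b i x

/-- Bivariate extension `𝐏_{m_k} = P_{m_k} × I` (acting in the first variable). -/
def PP (mk mr : ℕ) (a b : ℝ) (F : ℝ × ℝ → ℝ) : ℝ × ℝ → ℝ := fun z =>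
  Pop mk mr a b (fun x => F (x, z.2)) z.1

/-- Bivariate extension `𝐐_{n_ℓ} = I × Q_{n_ℓ}` (acting in the second variable). -/
def QQ (nl nr : ℕ) (c d : ℝ) (F : ℝ × ℝ → ℝ) : ℝ × ℝ → ℝ := fun z =>
  Pop nl nr c d (fun y => F (z.1, y)) z.2

/-- Maximum absolute row sum matrix norm. -/
def rowNorm {p q : ℕ} (A : Matrix (Fin p) (Fin q) ℝ) : ℝ := ⨆ i : Fin p, ∑ j, |A i j|

/-- `C_{m_r} = max_i sup{ |λ_i^{m_r} f| : f ∈ C[a,b], ‖f‖_∞ ≤ 1 }`. -/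
def Cbase (mr : ℕ) (a b : ℝ) : ℝ :=
  ⨆ i : Fin (mr + 1),
    ⨆ f : {f : ℝ → ℝ // ContinuousOn f (Set.Icc a b) ∧ supN (Set.Icc a b) f ≤ 1},
      |lam mr a b i f.1|

/-- `C_{m_r,m_k} = C_{m_r}·(m_k+1)·‖E_{m_k}^{m_r}(α^k,:)⁻¹‖_∞`. -/
def Cconst (mk mr : ℕ) (a b : ℝ) : ℝ :=
  Cbase mr a b * ((mk : ℝ) + 1) * rowNorm (Esub mk mr a b)⁻¹

/-- `Π_m`: univariate polynomial functions of degree at most `m`. -/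
def polyF (m : ℕ) : Submodule ℝ (ℝ → ℝ) :=
  Submodule.span ℝ {f : ℝ → ℝ | ∃ i ≤ m, f = fun x => x ^ i}

/-- `Π_p ⊗ Π_q`: bivariate polynomial functions of degree `≤ p` in `x` and `≤ q` in `y`. -/
def polyF2 (p q : ℕ) : Submodule ℝ (ℝ × ℝ → ℝ) :=
  Submodule.span ℝ {F : ℝ × ℝ → ℝ | ∃ i ≤ p, ∃ j ≤ q, F = fun z => z.1 ^ i * z.2 ^ j}

/-- `S_{𝐦,𝐧} = Σ_{k=0}^r Π_{m_k} ⊗ Π_{n_{r-k}}` (as a space of functions). -/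
def SmnF (r : ℕ) (m n : ℕ → ℕ) : Submodule ℝ (ℝ × ℝ → ℝ) :=
  ∑ k ∈ Finset.range (r + 1), polyF2 (m k) (n (r - k))

/-- `Π_p ⊗ Π_q` inside the bivariate polynomial ring. -/
def PiTP (p q : ℕ) : Submodule ℝ (MvPolynomial (Fin 2) ℝ) :=
  Submodule.span ℝ {P | ∃ i ≤ p, ∃ j ≤ q,
    P = MvPolynomial.monomial (Finsupp.single 0 i + Finsupp.single 1 j) (1 : ℝ)}

/-- `S_{𝐦,𝐧} = Σ_{k=0}^r Π_{m_k} ⊗ Π_{n_{r-k}}` in the bivariate polynomial ring. -/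
def SmnP (r : ℕ) (m n : ℕ → ℕ) : Submodule ℝ (MvPolynomial (Fin 2) ℝ) :=
  ∑ k ∈ Finset.range (r + 1), PiTP (m k) (n (r - k))

/-- The rectangle `[a,b] × [c,d]`. -/
def Rect (a b c d : ℝ) : Set (ℝ × ℝ) := Set.Icc a b ×ˢ Set.Icc c d

/-- `Fd` is a system of mixed partial derivatives of `Fd 0 0` of class `C^{p,q}` on the
rectangle: all mixed partials `F^{(i,j)}`, `i ≤ p`, `j ≤ q`, exist and are continuous. -/
def IsCpq (p q : ℕ) (a b c d : ℝ) (Fd : ℕ → ℕ → ℝ × ℝ → ℝ) : Prop :=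
  (∀ i < p, ∀ j ≤ q, ∀ z ∈ Rect a b c d,
      HasDerivWithinAt (fun x => Fd i j (x, z.2)) (Fd (i + 1) j z) (Set.Icc a b) z.1) ∧
  (∀ i ≤ p, ∀ j < q, ∀ z ∈ Rect a b c d,
      HasDerivWithinAt (fun y => Fd i j (z.1, y)) (Fd i (j + 1) z) (Set.Icc c d) z.2) ∧
  (∀ i ≤ p, ∀ j ≤ q, ContinuousOn (Fd i j) (Rect a b c d))

end

noncomputable section

/-- Boolean sum `A ⊕ B = A + B − AB` of operators. -/
def boolS (A B : (ℝ × ℝ → ℝ) → ℝ × ℝ → ℝ) : (ℝ × ℝ → ℝ) → ℝ × ℝ → ℝ :=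
  fun F z => A F z + B F z - A (B F) z

/-- The tensor product projector `𝐏_{m_k} 𝐐_{n_{r−k}}`. -/
def tpPQ (r : ℕ) (m n : ℕ → ℕ) (a b c d : ℝ) (k : ℕ) : (ℝ × ℝ → ℝ) → ℝ × ℝ → ℝ :=
  fun F => PP (m k) (m r) a b (QQ (n (r - k)) (n r) c d F)

/-- The iterated Boolean sum `(⋯((𝐏_{m_0}𝐐_{n_r}) ⊕ (𝐏_{m_1}𝐐_{n_{r−1}})) ⊕ ⋯) ⊕ (𝐏_{m_j}𝐐_{n_{r−j}})`. -/
def Bfold (r : ℕ) (m n : ℕ → ℕ) (a b c d : ℝ) : ℕ → (ℝ × ℝ → ℝ) → ℝ × ℝ → ℝ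
  | 0 => tpPQ r m n a b c d 0
  | k + 1 => boolS (Bfold r m n a b c d k) (tpPQ r m n a b c d (k + 1))

end

/-!
The functionals `λ^m_j` read off Bernstein coefficients: `T_m` times the matrix
`(C(l,s)/C(m,s))_{l,s}`, which expresses the powers `u^s` of `u = (x-a)/(b-a)` in the Bernstein
basis, is the Vandermonde matrix of the nodes, so `T_m` is invertible. Hence
`E_{m_k}^{m_r}(α^k,:)` times the same matrix is `(C(α^k_i,s)/C(m_r,s))_{i,s}`, a column-scaled
evaluation matrix of the descending Pochhammer polynomials at the distinct points `α^k_i`, whose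
determinant is a Vandermonde determinant. So `D^{m_k}` is dual to `μ^{m_k}`, and `P_{m_k}` fixes
the Bernstein basis of `Π_{m_k}` and maps into `Π_{m_k}`. The tensor product `𝐏_{m_k}𝐐_{n_{r-k}}`
then fixes `Π_{m_k} ⊗ Π_{n_{r-k}}` and maps into it, while for `k ≤ j` the next one,
`𝐏_{m_{j+1}}𝐐_{n_{r-j-1}}`, maps `Π_{m_k} ⊗ Π_{n_{r-k}}` into `Π_{m_j} ⊗ Π_{n_{r-j}}`, where the
partial Boolean sum is already the identity. Since `A ⊕ B` fixes `F` whenever `B` does, or `A`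
fixes both `F` and `B F`, induction on the number of summands shows that `𝐁_{𝐦,𝐧}` fixes
`S_{𝐦,𝐧}`.
-/

open Finset Polynomial Matrix

noncomputable section

lemma sum_choose_mul_bernstein (m s : ℕ) (hs : s ≤ m) (u : ℝ) :
    ∑ l ∈ range (m + 1), (l.choose s : ℝ) * (m.choose l * (1 - u) ^ (m - l) * u ^ l)
      = m.choose s * u ^ s := by
  obtain ⟨t, rfl⟩ := Nat.exists_eq_add_of_le hs
  rw [show s + t + 1 = s + (t + 1) by ring, sum_range_add,
    sum_eq_zero fun l hl => by rw [Nat.choose_eq_zero_of_lt (mem_range.1 hl)]; simp, zero_add]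
  have hbinom := add_pow u (1 - u) t
  rw [add_sub_cancel, one_pow] at hbinom
  conv_rhs => rw [← mul_one (_ * u ^ s), hbinom, mul_sum]
  refine sum_congr rfl fun i _ => ?_
  have hchoose : ((s + t).choose (s + i) * (s + i).choose s : ℝ)
      = (s + t).choose s * t.choose i := by
    exact_mod_cast (Nat.choose_mul (Nat.le_add_right s i)).trans (by simp)
  rw [show s + t - (s + i) = t - i by omega, pow_add]
  linear_combination ((1 - u) ^ (t - i) * u ^ s * u ^ i) * hchoose

def scaledPow (a b : ℝ) (s : ℕ) : ℝ → ℝ := fun x => ((x - a) / (b - a)) ^ s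

lemma sum_choose_div_mul_bern {m s : ℕ} {a b : ℝ} (hab : b - a ≠ 0) (hs : s ≤ m) (x : ℝ) :
    ∑ l : Fin (m + 1), ((l : ℕ).choose s : ℝ) / m.choose s * bern m a b l x
      = scaledPow a b s x := by
  have hbx : (b - x) / (b - a) = 1 - (x - a) / (b - a) := by field_simp; ring
  have hchoose : (m.choose s : ℝ) ≠ 0 := by exact_mod_cast (Nat.choose_pos hs).ne'
  simp only [div_mul_eq_mul_div, ← sum_div, bern, hbx]
  rw [Fin.sum_univ_eq_sum_range (fun l => (l.choose s : ℝ) * (m.choose l *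
      (1 - (x - a) / (b - a)) ^ (m - l) * ((x - a) / (b - a)) ^ l)),
    sum_choose_mul_bernstein m s hs, mul_div_cancel_left₀ _ hchoose, scaledPow]

def powToBern (m : ℕ) : Matrix (Fin (m + 1)) (Fin (m + 1)) ℝ :=
  of fun l s => ((l : ℕ).choose s : ℝ) / m.choose s

lemma Tmat_mul_powToBern {m : ℕ} {a b : ℝ} (hab : b - a ≠ 0) :
    Tmat m a b * powToBern m = vandermonde fun i : Fin (m + 1) => (i : ℝ) / m := by
  ext i s
  have hnode : (node m a b i - a) / (b - a) = (i : ℝ) / m := by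
    rw [node, add_sub_cancel_left, mul_div_assoc, div_self hab, mul_one]
  rw [mul_apply, vandermonde_apply, ← hnode, ← scaledPow,
    ← sum_choose_div_mul_bern hab (Nat.lt_succ_iff.1 s.isLt)]
  exact sum_congr rfl fun l _ => mul_comm _ _

lemma isUnit_det_Tmat {m : ℕ} {a b : ℝ} (hm : 0 < m) (hab : b - a ≠ 0) :
    IsUnit (Tmat m a b).det := by
  have hV : (vandermonde fun i : Fin (m + 1) => (i : ℝ) / m).det ≠ 0 := by
    refine det_vandermonde_ne_zero_iff.2 fun i j hij => Fin.ext ?_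
    have hm' : (m : ℝ) ≠ 0 := by positivity
    exact_mod_cast (div_left_inj' hm').1 hij
  rw [← Tmat_mul_powToBern hab, det_mul] at hV
  exact isUnit_iff_ne_zero.2 (left_ne_zero_of_mul hV)

def lamₗ (m : ℕ) (a b : ℝ) (j : Fin (m + 1)) : (ℝ → ℝ) →ₗ[ℝ] ℝ :=
  LinearMap.proj j ∘ₗ (Tmat m a b)⁻¹.mulVecLin ∘ₗ
    LinearMap.pi fun i => LinearMap.proj (node m a b i)

lemma lamₗ_apply (m : ℕ) (a b : ℝ) (j : Fin (m + 1)) (f : ℝ → ℝ) : lamₗ m a b j f = lam m a b j f :=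
  rfl

lemma lam_sum_mul_bern {m : ℕ} {a b : ℝ} (hT : IsUnit (Tmat m a b).det) (c : Fin (m + 1) → ℝ)
    (j : Fin (m + 1)) : lam m a b j (fun x => ∑ l, c l * bern m a b l x) = c j := by
  have hnodes :
      (fun i : Fin (m + 1) => ∑ l, c l * bern m a b l (node m a b i)) = Tmat m a b *ᵥ c := by
    ext i; exact sum_congr rfl fun l _ => mul_comm _ _
  rw [lam, hnodes, mulVec_mulVec, nonsing_inv_mul _ hT, one_mulVec]

lemma lam_scaledPow {m s : ℕ} {a b : ℝ} (hm : 0 < m) (hab : b - a ≠ 0) (hs : s ≤ m)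
    (j : Fin (m + 1)) : lam m a b j (scaledPow a b s) = ((j : ℕ).choose s : ℝ) / m.choose s := by
  rw [← funext (sum_choose_div_mul_bern hab hs)]
  exact lam_sum_mul_bern (isUnit_det_Tmat hm hab) (fun l => ((l : ℕ).choose s : ℝ) / m.choose s) j

lemma det_choose_div_choose_ne_zero {k M : ℕ} (t : Fin (k + 1) → ℕ) (ht : Function.Injective t)
    (hkM : k ≤ M) : (of fun i s : Fin (k + 1) => ((t i).choose s : ℝ) / M.choose s).det ≠ 0 := by
  have hV := det_eval_matrixOfPolynomials_eq_det_vandermonde (fun i => (t i : ℝ))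
    (fun s => descPochhammer ℝ s) (fun s => descPochhammer_natDegree ℝ s)
    (fun s => monic_descPochhammer ℝ s)
  have hscale : (of fun i s : Fin (k + 1) => ((t i).choose s : ℝ) / M.choose s)
      = of fun i s : Fin (k + 1) =>
          ((s : ℕ).factorial * M.choose s : ℝ)⁻¹ * (descPochhammer ℝ s).eval (t i : ℝ) := by
    ext i s
    rw [of_apply, of_apply, descPochhammer_eval_eq_descFactorial,
      Nat.descFactorial_eq_factorial_mul_choose]
    have hfact : ((s : ℕ).factorial : ℝ) ≠ 0 := by positivity
    field_simp
    push_cast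
    ring
  have hrow := det_mul_row (fun s : Fin (k + 1) => ((s : ℕ).factorial * M.choose s : ℝ)⁻¹)
    (of fun i s : Fin (k + 1) => (descPochhammer ℝ s).eval (t i : ℝ))
  simp only [of_apply] at hrow
  rw [hscale, hrow, ← hV]
  refine mul_ne_zero (prod_ne_zero_iff.2 fun s _ => ?_) ?_
  · have hchoose : (M.choose s : ℝ) ≠ 0 := by exact_mod_cast (Nat.choose_pos (by omega)).ne'
    positivity
  · exact det_vandermonde_ne_zero_iff.2 (Nat.cast_injective.comp ht)

lemma alphaF_val {mk mr : ℕ} (hdvd : mk ∣ mr) (i : Fin (mk + 1)) :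
    (alphaF mk mr i : ℕ) = i * (mr / mk) := by
  refine min_eq_left ?_
  calc (i : ℕ) * (mr / mk) ≤ mk * (mr / mk) := Nat.mul_le_mul_right _ (Nat.lt_succ_iff.1 i.isLt)
    _ = mr := Nat.mul_div_cancel' hdvd

lemma Esub_mul_powToBern {mk mr : ℕ} {a b : ℝ} (hr : 0 < mr) (hkr : mk ≤ mr) (hab : b - a ≠ 0) :
    Esub mk mr a b * powToBern mk
      = of fun i s : Fin (mk + 1) => ((alphaF mk mr i : ℕ).choose s : ℝ) / mr.choose s := by
  ext i s
  have hs : (s : ℕ) ≤ mk := Nat.lt_succ_iff.1 s.isLt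
  rw [of_apply, ← lam_scaledPow hr hab (hs.trans hkr), ← funext (sum_choose_div_mul_bern hab hs),
    mul_apply, ← lamₗ_apply]
  have hsum : (fun x => ∑ l : Fin (mk + 1), ((l : ℕ).choose s : ℝ) / mk.choose s * bern mk a b l x)
      = ∑ l : Fin (mk + 1), (((l : ℕ).choose s : ℝ) / mk.choose s) • bern mk a b l := by
    ext x; simp [Finset.sum_apply]
  rw [hsum, map_sum]
  refine sum_congr rfl fun l _ => ?_
  rw [map_smul, smul_eq_mul, mul_comm]
  rfl

lemma isUnit_det_Esub {mk mr : ℕ} {a b : ℝ} (hk : 0 < mk) (hr : 0 < mr) (hdvd : mk ∣ mr)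
    (hab : b - a ≠ 0) : IsUnit (Esub mk mr a b).det := by
  have hkr := Nat.le_of_dvd hr hdvd
  have hα : Function.Injective fun i => (alphaF mk mr i : ℕ) := fun i j hij => Fin.ext <|
    Nat.eq_of_mul_eq_mul_right (Nat.div_pos hkr hk) (by simpa only [alphaF_val hdvd] using hij)
  have hC := det_choose_div_choose_ne_zero _ hα (by omega : mk ≤ mr)
  rw [← Esub_mul_powToBern hr hkr hab, det_mul] at hC
  exact isUnit_iff_ne_zero.2 (left_ne_zero_of_mul hC)

def popₗ (mk mr : ℕ) (a b : ℝ) : (ℝ → ℝ) →ₗ[ℝ] ℝ → ℝ :=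
  ∑ i : Fin (mk + 1), (lamₗ mr a b (alphaF mk mr i)).smulRight (Dq mk mr a b i)

lemma popₗ_apply (mk mr : ℕ) (a b : ℝ) (f : ℝ → ℝ) : popₗ mk mr a b f = Pop mk mr a b f := by
  ext x
  simp [popₗ, Pop, mu, lamₗ_apply]

lemma Pop_bern {mk mr : ℕ} {a b : ℝ} (hE : IsUnit (Esub mk mr a b).det) (l : Fin (mk + 1)) :
    Pop mk mr a b (bern mk a b l) = bern mk a b l := by
  ext x
  have hmu : ∀ i, mu mk mr a b i (bern mk a b l) = Esub mk mr a b i l := fun i => rfl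
  simp only [Pop, hmu, Dq, mul_sum]
  rw [sum_comm]
  calc ∑ l', ∑ i, Esub mk mr a b i l * ((Esub mk mr a b)⁻¹ l' i * bern mk a b l' x)
      = ∑ l', ((Esub mk mr a b)⁻¹ * Esub mk mr a b) l' l * bern mk a b l' x :=
        sum_congr rfl fun l' _ => by rw [mul_apply, sum_mul]; exact sum_congr rfl fun i _ => by ring
    _ = bern mk a b l x := by simp [nonsing_inv_mul _ hE, one_apply]

lemma eval_mem_polyF {m : ℕ} {p : ℝ[X]} (hp : p.natDegree ≤ m) : (fun x => p.eval x) ∈ polyF m := by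
  rw [show (fun x => p.eval x) = ∑ i ∈ range (m + 1), p.coeff i • fun x : ℝ => x ^ i by
    ext x; simp [eval_eq_sum_range' (Nat.lt_succ_of_le hp)]]
  exact Submodule.sum_mem _ fun i hi => Submodule.smul_mem _ _
    (Submodule.subset_span ⟨i, Nat.lt_succ_iff.1 (mem_range.1 hi), rfl⟩)

lemma bern_mem_polyF {m l : ℕ} {a b : ℝ} (hl : l ≤ m) : bern m a b l ∈ polyF m := by
  have hp : (C (m.choose l : ℝ) * (C (b - a)⁻¹ * (C b - X)) ^ (m - l)
      * (C (b - a)⁻¹ * (X - C a)) ^ l).natDegree ≤ m := by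
    compute_degree
    omega
  convert eval_mem_polyF hp using 1
  ext x
  simp [bern, div_eq_inv_mul]

lemma Dq_mem_polyF (mk mr : ℕ) (a b : ℝ) (i : Fin (mk + 1)) : Dq mk mr a b i ∈ polyF mk := by
  rw [show Dq mk mr a b i = ∑ l, (Esub mk mr a b)⁻¹ l i • bern mk a b l by ext; simp [Dq]]
  exact Submodule.sum_mem _ fun l _ => Submodule.smul_mem _ _ (bern_mem_polyF l.is_le)

lemma Pop_mem_polyF (mk mr : ℕ) (a b : ℝ) (f : ℝ → ℝ) : Pop mk mr a b f ∈ polyF mk := by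
  rw [show Pop mk mr a b f = ∑ i, mu mk mr a b i f • Dq mk mr a b i by ext; simp [Pop]]
  exact Submodule.sum_mem _ fun i _ => Submodule.smul_mem _ _ (Dq_mem_polyF mk mr a b i)

lemma polyF_le_span_bern {m : ℕ} {a b : ℝ} (hab : b - a ≠ 0) :
    polyF m ≤ Submodule.span ℝ (Set.range fun l : Fin (m + 1) => bern m a b l) := by
  have hpow : ∀ s ≤ m,
      scaledPow a b s ∈ Submodule.span ℝ (Set.range fun l : Fin (m + 1) => bern m a b l) := by
    intro s hs
    rw [show scaledPow a b s
        = ∑ l : Fin (m + 1), (((l : ℕ).choose s : ℝ) / m.choose s) • bern m a b l by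
          ext x; simp [← sum_choose_div_mul_bern hab hs x]]
    exact Submodule.sum_mem _ fun l _ => Submodule.smul_mem _ _ (Submodule.subset_span ⟨l, rfl⟩)
  refine Submodule.span_le.2 ?_
  rintro _ ⟨i, hi, rfl⟩
  have hx : (fun x : ℝ => x ^ i)
      = ∑ s ∈ range (i + 1), ((i.choose s : ℝ) * a ^ (i - s) * (b - a) ^ s) • scaledPow a b s := by
    ext x
    have hxa : x = (b - a) * ((x - a) / (b - a)) + a := by field_simp; ring
    conv_lhs => rw [hxa, add_pow]
    simp only [Finset.sum_apply, Pi.smul_apply, smul_eq_mul, scaledPow, mul_pow]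
    exact sum_congr rfl fun s _ => by ring
  rw [hx]
  exact Submodule.sum_mem _ fun s hs => Submodule.smul_mem _ _
    (hpow s ((Nat.lt_succ_iff.1 (mem_range.1 hs)).trans hi))

lemma Pop_eq_self {mk mr : ℕ} {a b : ℝ} (hab : b - a ≠ 0) (hE : IsUnit (Esub mk mr a b).det)
    {f : ℝ → ℝ} (hf : f ∈ polyF mk) : Pop mk mr a b f = f := by
  rw [← popₗ_apply]
  exact LinearMap.eqOn_span' (f := popₗ mk mr a b) (g := LinearMap.id)
    (by rintro _ ⟨l, rfl⟩; exact (popₗ_apply ..).trans (Pop_bern hE l)) (polyF_le_span_bern hab hf)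

def PPₗ (mk mr : ℕ) (a b : ℝ) : Module.End ℝ (ℝ × ℝ → ℝ) where
  toFun := PP mk mr a b
  map_add' F G := by
    ext z
    simp only [Pi.add_apply, PP, ← popₗ_apply]
    exact congrFun (map_add (popₗ mk mr a b) (fun x => F (x, z.2)) fun x => G (x, z.2)) z.1
  map_smul' t F := by
    ext z
    simp only [Pi.smul_apply, RingHom.id_apply, PP, ← popₗ_apply]
    exact congrFun (map_smul (popₗ mk mr a b) t fun x => F (x, z.2)) z.1

lemma PPₗ_apply (mk mr : ℕ) (a b : ℝ) (F : ℝ × ℝ → ℝ) : PPₗ mk mr a b F = PP mk mr a b F :=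
  rfl

def QQₗ (nl nr : ℕ) (c d : ℝ) : Module.End ℝ (ℝ × ℝ → ℝ) where
  toFun := QQ nl nr c d
  map_add' F G := by
    ext z
    simp only [Pi.add_apply, QQ, ← popₗ_apply]
    exact congrFun (map_add (popₗ nl nr c d) (fun y => F (z.1, y)) fun y => G (z.1, y)) z.2
  map_smul' t F := by
    ext z
    simp only [Pi.smul_apply, RingHom.id_apply, QQ, ← popₗ_apply]
    exact congrFun (map_smul (popₗ nl nr c d) t fun y => F (z.1, y)) z.2

lemma PP_mul (mk mr : ℕ) (a b : ℝ) (g h : ℝ → ℝ) :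
    PP mk mr a b (fun z => g z.1 * h z.2) = fun z => Pop mk mr a b g z.1 * h z.2 := by
  ext z
  have : (fun x => g x * h z.2) = h z.2 • g := by ext; simp [mul_comm]
  simp only [PP, this, ← popₗ_apply, map_smul, Pi.smul_apply, smul_eq_mul, mul_comm]

lemma QQ_mul (nl nr : ℕ) (c d : ℝ) (g h : ℝ → ℝ) :
    QQ nl nr c d (fun z => g z.1 * h z.2) = fun z => g z.1 * Pop nl nr c d h z.2 := by
  ext z
  have : (fun y => g z.1 * h y) = g z.1 • h := rfl
  simp only [QQ, this, ← popₗ_apply, map_smul, Pi.smul_apply, smul_eq_mul]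

lemma mul_mem_polyF2 {p q : ℕ} {f g : ℝ → ℝ} (hf : f ∈ polyF p) (hg : g ∈ polyF q) :
    (fun z : ℝ × ℝ => f z.1 * g z.2) ∈ polyF2 p q := by
  have h := Submodule.apply_mem_map₂ ((LinearMap.mul ℝ (ℝ × ℝ → ℝ)).compl₁₂
    (LinearMap.funLeft ℝ ℝ Prod.fst) (LinearMap.funLeft ℝ ℝ Prod.snd)) hf hg
  rw [polyF, polyF, Submodule.map₂_span_span] at h
  refine Submodule.span_mono ?_ h
  rintro _ ⟨_, ⟨i, hi, rfl⟩, _, ⟨j, hj, rfl⟩, rfl⟩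
  exact ⟨i, hi, j, hj, rfl⟩

lemma QQ_mem_polyF2 {nl nr p q : ℕ} {c d : ℝ} {F : ℝ × ℝ → ℝ} (hF : F ∈ polyF2 p q) :
    QQ nl nr c d F ∈ polyF2 p nl := by
  suffices h : polyF2 p q ≤ Submodule.comap (QQₗ nl nr c d) (polyF2 p nl) from h hF
  refine Submodule.span_le.2 ?_
  rintro _ ⟨i, hi, j, hj, rfl⟩
  show QQ nl nr c d (fun z => (fun x => x ^ i) z.1 * (fun y => y ^ j) z.2) ∈ polyF2 p nl
  rw [QQ_mul nl nr c d (· ^ i) (· ^ j)]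
  exact mul_mem_polyF2 (Submodule.subset_span ⟨i, hi, rfl⟩) (Pop_mem_polyF nl nr c d _)

lemma PP_QQ_mem_polyF2 (mk mr nl nr : ℕ) (a b c d : ℝ) (F : ℝ × ℝ → ℝ) :
    PP mk mr a b (QQ nl nr c d F) ∈ polyF2 mk nl := by
  have hQ : QQ nl nr c d F = ∑ j, fun z : ℝ × ℝ =>
      (fun x => mu nl nr c d j fun y => F (x, y)) z.1 * Dq nl nr c d j z.2 := by
    ext z; simp [QQ, Pop]
  rw [hQ, ← PPₗ_apply, map_sum]
  refine Submodule.sum_mem _ fun j _ => ?_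
  rw [PPₗ_apply, PP_mul mk mr a b (fun x => mu nl nr c d j fun y => F (x, y))]
  exact mul_mem_polyF2 (Pop_mem_polyF mk mr a b _) (Dq_mem_polyF nl nr c d j)

lemma PP_eq_self {mk mr p q : ℕ} {a b : ℝ} (hab : b - a ≠ 0) (hE : IsUnit (Esub mk mr a b).det)
    (hp : p ≤ mk) {F : ℝ × ℝ → ℝ} (hF : F ∈ polyF2 p q) : PP mk mr a b F = F := by
  refine LinearMap.eqOn_span' (f := PPₗ mk mr a b) (g := LinearMap.id) ?_ hF
  rintro _ ⟨i, hi, j, hj, rfl⟩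
  show PP mk mr a b (fun z => (fun x => x ^ i) z.1 * (fun y => y ^ j) z.2) = _
  rw [PP_mul mk mr a b (· ^ i) (· ^ j),
    Pop_eq_self hab hE (Submodule.subset_span ⟨i, hi.trans hp, rfl⟩)]
  rfl

lemma QQ_eq_self {nl nr p q : ℕ} {c d : ℝ} (hcd : d - c ≠ 0) (hE : IsUnit (Esub nl nr c d).det)
    (hq : q ≤ nl) {F : ℝ × ℝ → ℝ} (hF : F ∈ polyF2 p q) : QQ nl nr c d F = F := by
  refine LinearMap.eqOn_span' (f := QQₗ nl nr c d) (g := LinearMap.id) ?_ hF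
  rintro _ ⟨i, hi, j, hj, rfl⟩
  show QQ nl nr c d (fun z => (fun x => x ^ i) z.1 * (fun y => y ^ j) z.2) = _
  rw [QQ_mul nl nr c d (· ^ i) (· ^ j),
    Pop_eq_self hcd hE (Submodule.subset_span ⟨j, hj.trans hq, rfl⟩)]
  rfl

lemma boolS_apply_of_right {A B : (ℝ × ℝ → ℝ) → ℝ × ℝ → ℝ} {F : ℝ × ℝ → ℝ} (hB : B F = F) :
    boolS A B F = F := by
  ext z; simp [boolS, hB]

lemma boolS_apply_of_left {A B : (ℝ × ℝ → ℝ) → ℝ × ℝ → ℝ} {F : ℝ × ℝ → ℝ} (hA : A F = F)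
    (hAB : A (B F) = B F) : boolS A B F = F := by
  ext z; simp [boolS, hA, hAB]

lemma rel_of_forall_lt_rel_succ {α : Type*} (R : α → α → Prop) [Std.Refl R] [IsTrans α R]
    {f : ℕ → α} {r : ℕ} (h : ∀ k < r, R (f k) (f (k + 1))) {k l : ℕ} (hkl : k ≤ l) (hlr : l ≤ r) :
    R (f k) (f l) := by
  induction hkl with
  | refl => exact refl _
  | step _ ih => exact _root_.trans (ih (by omega)) (h _ (by omega))

lemma monotoneOn_Iic_of_lt_succ {m : ℕ → ℕ} {r : ℕ} (h : ∀ k < r, m k < m (k + 1)) :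
    MonotoneOn m (Set.Iic r) := fun _ _ _ hl hkl =>
  rel_of_forall_lt_rel_succ (· ≤ ·) (fun k hk => (h k hk).le) hkl hl

lemma isUnit_det_Esub_of_dvd_succ {m : ℕ → ℕ} {r : ℕ} {a b : ℝ} (hab : b - a ≠ 0) (hm0 : 0 < m 0)
    (hmi : ∀ k < r, m k < m (k + 1)) (hmd : ∀ k < r, m k ∣ m (k + 1)) {k : ℕ} (hk : k ≤ r) :
    IsUnit (Esub (m k) (m r) a b).det := by
  have hm := monotoneOn_Iic_of_lt_succ hmi
  have hpos : ∀ l ≤ r, 0 < m l := fun l hl =>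
    hm0.trans_le (hm (Set.mem_Iic.2 (Nat.zero_le r)) (Set.mem_Iic.2 hl) (Nat.zero_le l))
  exact isUnit_det_Esub (hpos k hk) (hpos r le_rfl)
    (rel_of_forall_lt_rel_succ (· ∣ ·) hmd hk le_rfl) hab

lemma exists_linearMap_coe_eq_Bfold (r : ℕ) (m n : ℕ → ℕ) (a b c d : ℝ) (j : ℕ) :
    ∃ L : Module.End ℝ (ℝ × ℝ → ℝ), ⇑L = Bfold r m n a b c d j := by
  induction j with
  | zero => exact ⟨PPₗ (m 0) (m r) a b * QQₗ (n (r - 0)) (n r) c d, rfl⟩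
  | succ j ih =>
    obtain ⟨L, hL⟩ := ih
    let T := PPₗ (m (j + 1)) (m r) a b * QQₗ (n (r - (j + 1))) (n r) c d
    refine ⟨L + T - L * T, ?_⟩
    ext F z
    simp only [Bfold, boolS, ← hL]
    rfl

lemma Bfold_mem (r : ℕ) (m n : ℕ → ℕ) (a b c d : ℝ) (j : ℕ) (F : ℝ × ℝ → ℝ) :
    Bfold r m n a b c d j F ∈ ∑ k ∈ range (j + 1), polyF2 (m k) (n (r - k)) := by
  induction j generalizing F with
  | zero => simpa [Bfold, tpPQ] using PP_QQ_mem_polyF2 _ _ _ _ a b c d F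
  | succ j ih =>
    rw [sum_range_succ]
    exact sub_mem (add_mem (Submodule.mem_sup_left (ih F))
      (Submodule.mem_sup_right (PP_QQ_mem_polyF2 _ _ _ _ a b c d F)))
      (Submodule.mem_sup_left (ih _))

lemma polyF2_mono {p q p' q' : ℕ} (hp : p ≤ p') (hq : q ≤ q') : polyF2 p q ≤ polyF2 p' q' :=
  Submodule.span_mono fun _ ⟨i, hi, j, hj, hF⟩ => ⟨i, hi.trans hp, j, hj.trans hq, hF⟩

lemma tpPQ_eq_self {r k : ℕ} {m n : ℕ → ℕ} {a b c d : ℝ} (hab : b - a ≠ 0) (hcd : d - c ≠ 0)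
    (hEm : IsUnit (Esub (m k) (m r) a b).det) (hEn : IsUnit (Esub (n (r - k)) (n r) c d).det)
    {F : ℝ × ℝ → ℝ} (hF : F ∈ polyF2 (m k) (n (r - k))) : tpPQ r m n a b c d k F = F := by
  rw [tpPQ, QQ_eq_self hcd hEn le_rfl hF, PP_eq_self hab hEm le_rfl hF]

lemma tpPQ_succ_mem {r j k : ℕ} {m n : ℕ → ℕ} {a b c d : ℝ} (hab : b - a ≠ 0)
    (hm : MonotoneOn m (Set.Iic r)) (hn : MonotoneOn n (Set.Iic r))
    (hEm : IsUnit (Esub (m (j + 1)) (m r) a b).det) (hkj : k ≤ j) (hjr : j + 1 ≤ r)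
    {F : ℝ × ℝ → ℝ} (hF : F ∈ polyF2 (m k) (n (r - k))) :
    tpPQ r m n a b c d (j + 1) F ∈ polyF2 (m j) (n (r - j)) := by
  have hQ := QQ_mem_polyF2 (nl := n (r - (j + 1))) (nr := n r) (c := c) (d := d) hF
  rw [tpPQ, PP_eq_self hab hEm (hm (Set.mem_Iic.2 (by omega)) (Set.mem_Iic.2 hjr) (by omega)) hQ]
  exact polyF2_mono (hm (Set.mem_Iic.2 (by omega)) (Set.mem_Iic.2 (by omega)) hkj)
    (hn (Set.mem_Iic.2 (Nat.sub_le _ _)) (Set.mem_Iic.2 (Nat.sub_le _ _)) (by omega)) hQ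

lemma Bfold_eq_self {r : ℕ} {m n : ℕ → ℕ} {a b c d : ℝ} (hab : b - a ≠ 0) (hcd : d - c ≠ 0)
    (hm : MonotoneOn m (Set.Iic r)) (hn : MonotoneOn n (Set.Iic r))
    (hEm : ∀ k ≤ r, IsUnit (Esub (m k) (m r) a b).det)
    (hEn : ∀ k ≤ r, IsUnit (Esub (n k) (n r) c d).det) {j k : ℕ} (hjr : j ≤ r) (hkj : k ≤ j)
    {F : ℝ × ℝ → ℝ} (hF : F ∈ polyF2 (m k) (n (r - k))) : Bfold r m n a b c d j F = F := by
  induction j generalizing k F with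
  | zero =>
    obtain rfl : k = 0 := by omega
    exact tpPQ_eq_self hab hcd (hEm 0 hjr) (hEn _ (Nat.sub_le r 0)) hF
  | succ j ih =>
    rcases hkj.lt_or_eq with hkj | rfl
    · exact boolS_apply_of_left (ih (by omega) (by omega) hF)
        (ih (by omega) le_rfl (tpPQ_succ_mem hab hm hn (hEm _ hjr) (by omega) hjr hF))
    · exact boolS_apply_of_right (tpPQ_eq_self hab hcd (hEm _ hjr) (hEn _ (Nat.sub_le _ _)) hF)

end

/-- The iterated Boolean sum `𝐁_{𝐦,𝐧} = ⨁_{k=0}^r 𝐏_{m_k}𝐐_{n_{r−k}}` is a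
linear projector of `C([a,b]×[c,d])` onto `S_{𝐦,𝐧}`: linear, idempotent, mapping into
`S_{𝐦,𝐧}` and reproducing every element of `S_{𝐦,𝐧}`. -/
theorem stmt8 (a b c d : ℝ) (hab : a < b) (hcd : c < d) (r : ℕ) (m n : ℕ → ℕ)
    (hm0 : 0 < m 0) (hn0 : 0 < n 0)
    (hmi : ∀ k < r, m k < m (k + 1)) (hni : ∀ k < r, n k < n (k + 1))
    (hmd : ∀ k < r, m k ∣ m (k + 1)) (hnd : ∀ k < r, n k ∣ n (k + 1)) :
    (∀ F G : ℝ × ℝ → ℝ, ContinuousOn F (Rect a b c d) → ContinuousOn G (Rect a b c d) →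
        Bfold r m n a b c d r (F + G) =
          Bfold r m n a b c d r F + Bfold r m n a b c d r G) ∧
    (∀ (t : ℝ) (F : ℝ × ℝ → ℝ), ContinuousOn F (Rect a b c d) →
        Bfold r m n a b c d r (t • F) = t • Bfold r m n a b c d r F) ∧
    (∀ F : ℝ × ℝ → ℝ, ContinuousOn F (Rect a b c d) →
        Bfold r m n a b c d r (Bfold r m n a b c d r F) = Bfold r m n a b c d r F) ∧
    (∀ F : ℝ × ℝ → ℝ, ContinuousOn F (Rect a b c d) →
        Bfold r m n a b c d r F ∈ SmnF r m n) ∧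
    (∀ p : ℝ × ℝ → ℝ, p ∈ SmnF r m n → Bfold r m n a b c d r p = p) := by
  have hab' : b - a ≠ 0 := (sub_pos.2 hab).ne'
  have hcd' : d - c ≠ 0 := (sub_pos.2 hcd).ne'
  obtain ⟨L, hL⟩ := exists_linearMap_coe_eq_Bfold r m n a b c d r
  have hfix : SmnF r m n ≤ LinearMap.eqLocus L LinearMap.id := by
    refine sum_induction _ (· ≤ _) (fun _ _ => sup_le) bot_le fun k hk F hF => ?_
    rw [LinearMap.mem_eqLocus, hL]
    exact Bfold_eq_self hab' hcd' (monotoneOn_Iic_of_lt_succ hmi) (monotoneOn_Iic_of_lt_succ hni)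
      (fun _ => isUnit_det_Esub_of_dvd_succ hab' hm0 hmi hmd)
      (fun _ => isUnit_det_Esub_of_dvd_succ hcd' hn0 hni hnd) le_rfl (mem_range_succ_iff.1 hk) hF
  have hfix' : ∀ p ∈ SmnF r m n, Bfold r m n a b c d r p = p := fun p hp => hL ▸ hfix hp
  exact ⟨fun F G _ _ => hL ▸ map_add L F G, fun t F _ => hL ▸ map_smul L t F,
    fun F _ => hfix' _ (Bfold_mem r m n a b c d r F), fun F _ => Bfold_mem r m n a b c d r F, hfix'⟩
end

section
/- For all 0 ≤ k, ℓ ≤ r and every F ∈ C([a,b]×[c,d]), ‖𝐏_{m_k}𝐐_{n_ℓ} F‖_{∞,[a,b]×[c,d]} ≤ C_{m_r,m_k}·C_{n_r,n_ℓ}·‖F‖_{∞,[a,b]×[c,d]}, where C_{m_r,m_k} := C_{m_r}·(m_k+1)·‖E_{m_k}^{m_r}(α^k,:)^{−1}‖_∞ and C_{n_r,n_ℓ} := C_{n_r}·(n_ℓ+1)·‖E_{n_ℓ}^{n_r}(β^ℓ,:)^{−1}‖_∞, with C_{m_r} := max_{0≤i≤m_r} sup{|λ_i^{m_r}f| : ‖f‖_{∞,[a,b]}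 ≤ 1} and C_{n_r} defined analogously on [c,d], E_{m_k}^{m_r} the degree elevation matrix (λ_i^{m_r}(B_j^{m_k}))_{ij} with invertible row-submatrix E_{m_k}^{m_r}(α^k,:), and ‖·‖_∞ the maximum absolute row sum matrix norm. -/
open scoped BigOperators

/-! For `x ∈ [a,b]` the vector `(D_i^{m_k}(x))_i` is the combination of the rows of
`E_{m_k}^{m_r}(α^k,:)⁻¹` with the Bernstein weights `B_l^{m_k}(x)`, which are nonnegative and sum
to one, so `Σ_i |D_i^{m_k}(x)| ≤ ‖E_{m_k}^{m_r}(α^k,:)⁻¹‖_∞`. Together with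
`|λ_i^{m_r} f| ≤ C_{m_r} ‖f‖_∞` this bounds the univariate operator by `C_{m_r,m_k}`. The tensor
bound follows by applying the univariate bound in `y` to `F` and then in `x` to `𝐐_{n_ℓ} F`,
whose `x`-sections are continuous because `Q_{n_ℓ}` only samples `F` at finitely many nodes. -/

open Set

section SupNorm

variable {α : Type*} {S : Set α} {f : α → ℝ}

lemma supN_nonneg (S : Set α) (f : α → ℝ) : 0 ≤ supN S f :=
  Real.iSup_nonneg fun _ => abs_nonneg _

lemma abs_le_supN [TopologicalSpace α] (hS : IsCompact S) (hf : ContinuousOn f S) {z : α}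
    (hz : z ∈ S) : |f z| ≤ supN S f := by
  have hbdd : BddAbove ((fun z => |f z|) '' S) := hS.bddAbove_image hf.abs
  rw [image_eq_range] at hbdd
  exact le_ciSup hbdd (⟨z, hz⟩ : S)

lemma supN_le {M : ℝ} (hM : 0 ≤ M) (h : ∀ z ∈ S, |f z| ≤ M) : supN S f ≤ M :=
  Real.iSup_le (fun z => h z z.2) hM

end SupNorm

lemma abs_mulVec_apply_le {ι κ : Type*} [Fintype κ] (A : Matrix ι κ ℝ) {v : κ → ℝ} {M : ℝ}
    (hv : ∀ j, |v j| ≤ M) (i : ι) : |Matrix.mulVec A v i| ≤ (∑ j, |A i j|) * M :=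
  calc |Matrix.mulVec A v i| ≤ ∑ j, |A i j| * |v j| := by
        simpa only [Matrix.mulVec, dotProduct, abs_mul]
          using Finset.abs_sum_le_sum_abs (fun j => A i j * v j) Finset.univ
    _ ≤ ∑ j, |A i j| * M := by gcongr with j; exact hv j
    _ = (∑ j, |A i j|) * M := Finset.sum_mul .. |>.symm

lemma sum_abs_le_rowNorm {p q : ℕ} (A : Matrix (Fin p) (Fin q) ℝ) (i : Fin p) :
    ∑ j, |A i j| ≤ rowNorm A :=
  le_ciSup (f := fun i => ∑ j, |A i j|) (finite_range _).bddAbove i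

lemma rowNorm_nonneg {p q : ℕ} (A : Matrix (Fin p) (Fin q) ℝ) : 0 ≤ rowNorm A :=
  Real.iSup_nonneg fun _ => Finset.sum_nonneg fun _ _ => abs_nonneg _

lemma sum_abs_vecMul_le_rowNorm {p q : ℕ} (A : Matrix (Fin p) (Fin q) ℝ) {w : Fin p → ℝ}
    (hw : ∀ i, 0 ≤ w i) (hw1 : ∑ i, w i = 1) : ∑ j, |Matrix.vecMul w A j| ≤ rowNorm A :=
  calc ∑ j, |Matrix.vecMul w A j| ≤ ∑ j, ∑ i, w i * |A i j| := by
        gcongr with j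
        simpa only [Matrix.vecMul, dotProduct, abs_mul, abs_of_nonneg (hw _)]
          using Finset.abs_sum_le_sum_abs (fun i => w i * A i j) Finset.univ
    _ = ∑ i, w i * ∑ j, |A i j| := by rw [Finset.sum_comm]; simp only [Finset.mul_sum]
    _ ≤ ∑ i, w i * rowNorm A := by
        gcongr with i
        · exact hw i
        · exact sum_abs_le_rowNorm A i
    _ = rowNorm A := by rw [← Finset.sum_mul, hw1, one_mul]

section Bernstein

variable {a b : ℝ}

lemma node_mem (hab : a ≤ b) (m : ℕ) (i : Fin (m + 1)) : node m a b i ∈ Icc a b := by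
  have hi : (i : ℝ) / m ∈ Icc (0 : ℝ) 1 := by
    refine ⟨by positivity, div_le_one_of_le₀ ?_ (Nat.cast_nonneg m)⟩
    exact_mod_cast Fin.is_le i
  have hba : 0 ≤ b - a := sub_nonneg.2 hab
  constructor <;> simp only [node] <;> nlinarith [hi.1, hi.2]

lemma bern_nonneg (hab : a < b) (m l : ℕ) {x : ℝ} (hx : x ∈ Icc a b) : 0 ≤ bern m a b l x := by
  have h1 : 0 ≤ (b - x) / (b - a) := div_nonneg (by linarith [hx.2]) (by linarith)
  have h2 : 0 ≤ (x - a) / (b - a) := div_nonneg (by linarith [hx.1]) (by linarith)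
  unfold bern
  positivity

lemma sum_bern_eq_one (hab : a < b) (m : ℕ) (x : ℝ) : ∑ l : Fin (m + 1), bern m a b l x = 1 := by
  have hsum : (x - a) / (b - a) + (b - x) / (b - a) = 1 := by
    rw [← add_div, show x - a + (b - x) = b - a by ring, div_self (sub_ne_zero.2 hab.ne')]
  calc ∑ l : Fin (m + 1), bern m a b l x = ((x - a) / (b - a) + (b - x) / (b - a)) ^ m := by
        rw [Fin.sum_univ_eq_sum_range (fun l => bern m a b l x), add_pow]
        refine Finset.sum_congr rfl fun l _ => ?_
        simp only [bern]
        ring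
    _ = 1 := by rw [hsum, one_pow]

end Bernstein

section Functionals

variable {a b : ℝ} {m : ℕ}

lemma lam_const_mul (j : Fin (m + 1)) (c : ℝ) (f : ℝ → ℝ) :
    lam m a b j (fun x => c * f x) = c * lam m a b j f := by
  simp only [lam, Matrix.mulVec, dotProduct, Finset.mul_sum]
  exact Finset.sum_congr rfl fun _ _ => by ring

lemma abs_lam_le (j : Fin (m + 1)) {f : ℝ → ℝ} {M : ℝ}
    (hM : ∀ i : Fin (m + 1), |f (node m a b i)| ≤ M) :
    |lam m a b j f| ≤ (∑ i, |(Tmat m a b)⁻¹ j i|) * M :=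
  abs_mulVec_apply_le _ hM j

lemma abs_lam_le_Cbase (hab : a ≤ b) (i : Fin (m + 1)) {f : ℝ → ℝ}
    (hf : ContinuousOn f (Icc a b)) (hf1 : supN (Icc a b) f ≤ 1) :
    |lam m a b i f| ≤ Cbase m a b := by
  have hbdd (j : Fin (m + 1)) : BddAbove (range fun
      g : {f : ℝ → ℝ // ContinuousOn f (Icc a b) ∧ supN (Icc a b) f ≤ 1} => |lam m a b j g.1|) := by
    refine ⟨(∑ p, |(Tmat m a b)⁻¹ j p|) * 1, ?_⟩
    rintro _ ⟨g, rfl⟩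
    exact abs_lam_le j fun p => (abs_le_supN isCompact_Icc g.2.1 (node_mem hab m p)).trans g.2.2
  exact (le_ciSup (hbdd i) ⟨f, hf, hf1⟩).trans <| by
    unfold Cbase
    exact le_ciSup (f := fun j => ⨆ g : {f : ℝ → ℝ // ContinuousOn f (Icc a b) ∧
      supN (Icc a b) f ≤ 1}, |lam m a b j g.1|) (finite_range _).bddAbove i

lemma abs_lam_le_Cbase_mul (hab : a ≤ b) (i : Fin (m + 1)) {f : ℝ → ℝ}
    (hf : ContinuousOn f (Icc a b)) {M : ℝ} (hM : ∀ x ∈ Icc a b, |f x| ≤ M) :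
    |lam m a b i f| ≤ Cbase m a b * M := by
  have hM0 : 0 ≤ M := (abs_nonneg _).trans (hM a (left_mem_Icc.2 hab))
  rcases hM0.eq_or_lt with rfl | hMpos
  · simpa using abs_lam_le i fun p => hM _ (node_mem hab m p)
  have hg1 : supN (Icc a b) (fun x => M⁻¹ * f x) ≤ 1 := supN_le zero_le_one fun x hx => by
    rw [abs_mul, abs_of_pos (inv_pos.2 hMpos), inv_mul_le_iff₀ hMpos, mul_one]
    exact hM x hx
  have hf_eq : f = fun x => M * (M⁻¹ * f x) := by
    funext x; rw [mul_inv_cancel_left₀ hMpos.ne']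
  rw [hf_eq, lam_const_mul, abs_mul, abs_of_pos hMpos, mul_comm M]
  gcongr
  exact abs_lam_le_Cbase hab i (continuousOn_const.mul hf) hg1

end Functionals

section QuasiInterpolant

variable {a b : ℝ} {mk mr : ℕ}

lemma sum_abs_Dq_le (hab : a < b) {x : ℝ} (hx : x ∈ Icc a b) :
    ∑ i, |Dq mk mr a b i x| ≤ rowNorm (Esub mk mr a b)⁻¹ := by
  have hD : ∀ i, Dq mk mr a b i x =
      Matrix.vecMul (fun l : Fin (mk + 1) => bern mk a b l x) (Esub mk mr a b)⁻¹ i :=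
    fun i => Finset.sum_congr rfl fun _ _ => mul_comm _ _
  simp only [hD]
  exact sum_abs_vecMul_le_rowNorm _ (fun l => bern_nonneg hab mk l hx) (sum_bern_eq_one hab mk x)

lemma abs_Pop_le (hab : a < b) {f : ℝ → ℝ} (hf : ContinuousOn f (Icc a b)) {M : ℝ}
    (hM : ∀ x ∈ Icc a b, |f x| ≤ M) {x : ℝ} (hx : x ∈ Icc a b) :
    |Pop mk mr a b f x| ≤ Cconst mk mr a b * M := by
  have hCM : 0 ≤ Cbase mr a b * M := (abs_nonneg _).trans (abs_lam_le_Cbase_mul hab.le 0 hf hM)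
  have hD : ∑ i, |Dq mk mr a b i x| ≤ (mk + 1) * rowNorm (Esub mk mr a b)⁻¹ :=
    (sum_abs_Dq_le hab hx).trans <| le_mul_of_one_le_left (rowNorm_nonneg _) <| by simp
  calc |Pop mk mr a b f x| ≤ ∑ i, |mu mk mr a b i f| * |Dq mk mr a b i x| := by
        simpa only [Pop, abs_mul]
          using Finset.abs_sum_le_sum_abs (fun i => mu mk mr a b i f * Dq mk mr a b i x) Finset.univ
    _ ≤ ∑ i, Cbase mr a b * M * |Dq mk mr a b i x| := by
        gcongr with i
        exact abs_lam_le_Cbase_mul hab.le _ hf hM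
    _ = Cbase mr a b * M * ∑ i, |Dq mk mr a b i x| := (Finset.mul_sum ..).symm
    _ ≤ Cbase mr a b * M * ((mk + 1) * rowNorm (Esub mk mr a b)⁻¹) := by gcongr
    _ = Cconst mk mr a b * M := by unfold Cconst; ring

lemma continuousOn_Pop {X : Type*} [TopologicalSpace X] {s : Set X} {G : X → ℝ → ℝ}
    (hG : ∀ p : Fin (mr + 1), ContinuousOn (fun z => G z (node mr a b p)) s) (x : ℝ) :
    ContinuousOn (fun z => Pop mk mr a b (G z) x) s := by
  simp only [Pop, mu, lam, Matrix.mulVec, dotProduct]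
  fun_prop

end QuasiInterpolant

section Tensor

variable {a b c d : ℝ} {F G : ℝ × ℝ → ℝ} {M : ℝ}

lemma abs_PP_le (hab : a < b) (mk mr : ℕ)
    (hG : ∀ y ∈ Icc c d, ContinuousOn (fun x => G (x, y)) (Icc a b))
    (hM : ∀ z ∈ Rect a b c d, |G z| ≤ M) :
    ∀ z ∈ Rect a b c d, |PP mk mr a b G z| ≤ Cconst mk mr a b * M :=
  fun z hz => abs_Pop_le hab (hG z.2 hz.2) (fun x hx => hM (x, z.2) ⟨hx, hz.2⟩) hz.1

lemma abs_QQ_le (hcd : c < d) (nl nr : ℕ)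
    (hG : ∀ x ∈ Icc a b, ContinuousOn (fun y => G (x, y)) (Icc c d))
    (hM : ∀ z ∈ Rect a b c d, |G z| ≤ M) :
    ∀ z ∈ Rect a b c d, |QQ nl nr c d G z| ≤ Cconst nl nr c d * M :=
  fun z hz => abs_Pop_le hcd (hG z.1 hz.1) (fun y hy => hM (z.1, y) ⟨hz.1, hy⟩) hz.2

lemma continuousOn_slice_fst (hF : ContinuousOn F (Rect a b c d)) {y : ℝ} (hy : y ∈ Icc c d) :
    ContinuousOn (fun x => F (x, y)) (Icc a b) :=
  hF.comp (Continuous.prodMk_left y).continuousOn fun _ hx => ⟨hx, hy⟩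

lemma continuousOn_slice_snd (hF : ContinuousOn F (Rect a b c d)) {x : ℝ} (hx : x ∈ Icc a b) :
    ContinuousOn (fun y => F (x, y)) (Icc c d) :=
  hF.comp (Continuous.prodMk_right x).continuousOn fun _ hy => ⟨hx, hy⟩

lemma continuousOn_QQ_slice_fst (hcd : c < d) (nl nr : ℕ) (hF : ContinuousOn F (Rect a b c d))
    (y : ℝ) : ContinuousOn (fun x => QQ nl nr c d F (x, y)) (Icc a b) :=
  continuousOn_Pop (fun p => continuousOn_slice_fst hF (node_mem hcd.le nr p)) y

end Tensor

theorem stmt10_general (a b c d : ℝ) (hab : a < b) (hcd : c < d) (r : ℕ) (m n : ℕ → ℕ) :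
    ∀ k ≤ r, ∀ l ≤ r, ∀ F : ℝ × ℝ → ℝ, ContinuousOn F (Rect a b c d) →
      supN (Rect a b c d) (PP (m k) (m r) a b (QQ (n l) (n r) c d F)) ≤
        Cconst (m k) (m r) a b * Cconst (n l) (n r) c d * supN (Rect a b c d) F := by
  intro k _ l _ F hF
  have hF_le : ∀ z ∈ Rect a b c d, |F z| ≤ supN (Rect a b c d) F :=
    fun _ hz => abs_le_supN (isCompact_Icc.prod isCompact_Icc) hF hz
  have hQ_le := abs_QQ_le hcd (n l) (n r) (fun _ hx => continuousOn_slice_snd hF hx) hF_le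
  have hPQ_le := abs_PP_le hab (m k) (m r)
    (fun y _ => continuousOn_QQ_slice_fst hcd (n l) (n r) hF y) hQ_le
  have hcorner : (a, c) ∈ Rect a b c d := ⟨left_mem_Icc.2 hab.le, left_mem_Icc.2 hcd.le⟩
  rw [mul_assoc]
  exact supN_le ((abs_nonneg _).trans (hPQ_le _ hcorner)) hPQ_le

/-- Tensor product stability:
`‖𝐏_{m_k}𝐐_{n_ℓ} F‖_∞ ≤ C_{m_r,m_k}·C_{n_r,n_ℓ}·‖F‖_∞` on `[a,b]×[c,d]`. -/
theorem stmt10 (a b c d : ℝ) (hab : a < b) (hcd : c < d) (r : ℕ) (m n : ℕ → ℕ)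
    (hm0 : 0 < m 0) (hn0 : 0 < n 0)
    (hmi : ∀ k < r, m k < m (k + 1)) (hni : ∀ k < r, n k < n (k + 1))
    (hmd : ∀ k < r, m k ∣ m (k + 1)) (hnd : ∀ k < r, n k ∣ n (k + 1)) :
    ∀ k ≤ r, ∀ l ≤ r, ∀ F : ℝ × ℝ → ℝ, ContinuousOn F (Rect a b c d) →
      supN (Rect a b c d) (PP (m k) (m r) a b (QQ (n l) (n r) c d F)) ≤
        Cconst (m k) (m r) a b * Cconst (n l) (n r) c d * supN (Rect a b c d) F :=
  stmt10_general a b c d hab hcd r m n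
end
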